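/- Let R be a commutative ring with unity in which 1 can be written as a sum of two units, and let M be a right R-module. Then for every n ≥ 1 (including n = 1), the abelianization of GL_n(R) ⋉ Mⁿ is isomorphic to the abelianization of GL_n(R). -/

import Mathlib

/-- Matrix action on `Fin n → M` by matrix-vector multiplication. -/
def matSMul (R M : Type*) [CommRing R] [AddCommGroup M] [Module R M] (n : ℕ)
    (A : Matrix (Fin n) (Fin n) R) : AddMonoid.End (Fin n → M) :=
  AddMonoidHom.mk' (fun x i => ∑ j, A i j • x j) (by
    intro x y
    funext i
    simp [smul_add, Finset.sum_add_distrib])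

def matSMulHom (R M : Type*) [CommRing R] [AddCommGroup M] [Module R M] (n : ℕ) :
    Matrix (Fin n) (Fin n) R →* AddMonoid.End (Fin n → M) where
  toFun := matSMul R M n
  map_one' := by
    refine AddMonoidHom.ext fun x => funext fun i => ?_
    simp [matSMul, Matrix.one_apply, Finset.sum_ite_eq]
    rfl
  map_mul' A B := by
    refine AddMonoidHom.ext fun x => funext fun i => ?_
    show ∑ j, (A * B) i j • x j = ∑ k, A i k • ∑ j, B k j • x j
    simp only [Matrix.mul_apply, Finset.sum_smul, Finset.smul_sum, mul_smul]
    exact Finset.sum_comm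

def unitsEndToAddAut (P : Type*) [AddCommGroup P] : (AddMonoid.End P)ˣ →* Multiplicative (AddAut P) where
  toFun u := Multiplicative.ofAdd
    { toFun := u.val
      invFun := (↑u⁻¹ : AddMonoid.End P)
      left_inv := fun x => DFunLike.congr_fun u.inv_mul x
      right_inv := fun x => DFunLike.congr_fun u.mul_inv x
      map_add' := u.val.map_add }
  map_one' := rfl
  map_mul' _ _ := rfl

def addAutToMulAut (P : Type*) [AddGroup P] : Multiplicative (AddAut P) →* MulAut (Multiplicative P) where
  toFun e := AddEquiv.toMultiplicative e.toAdd
  map_one' := rfl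
  map_mul' _ _ := rfl

/-- The action of `GL n R` on the additive group `Mⁿ` (written multiplicatively). -/
def glAction (R M : Type*) [CommRing R] [AddCommGroup M] [Module R M] (n : ℕ) :
    GL (Fin n) R →* MulAut (Multiplicative (Fin n → M)) :=
  (addAutToMulAut _).comp ((unitsEndToAddAut _).comp (Units.map (matSMulHom R M n)))

/-!
The scalar matrix `u` acts on `Mⁿ` as multiplication by `u`, and `u - 1 = -v` is a unit, so every
element of `Mⁿ` is a commutator `u • m - m` of `u` and some `m` in the semidirect product. Hence `Mⁿ`
dies in the abelianization, and the split surjection onto `GL_n(R)` induces an isomorphism.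
-/
namespace SemidirectProduct

variable {N G : Type*} [Group N] [Group G] {φ : G →* MulAut N}

theorem abelianization_of_inl_aut (g : G) (n : N) :
    Abelianization.of (inl (φ := φ) (φ g n)) = Abelianization.of (inl n) := by
  rw [inl_aut, map_mul, map_mul, mul_right_comm, ← map_mul, ← map_mul inr, mul_inv_cancel, map_one,
    map_one, one_mul]

theorem abelianization_of_inl_eq_one_of_surjective (g : G)
    (hg : Function.Surjective fun n : N => φ g n * n⁻¹) (n : N) :
    Abelianization.of (inl (φ := φ) n) = 1 := by
  obtain ⟨m, rfl⟩ := hg n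
  rw [map_mul, map_mul, abelianization_of_inl_aut, map_inv, map_inv, mul_inv_cancel]

def abelianizationEquivOfInlEqOne (h : ∀ n : N, Abelianization.of (inl (φ := φ) n) = 1) :
    Abelianization (N ⋊[φ] G) ≃* Abelianization G :=
  MonoidHom.toMulEquiv (Abelianization.map rightHom) (Abelianization.map inr)
    (Abelianization.hom_ext _ _ <| MonoidHom.ext fun x => by
      simp only [MonoidHom.comp_apply, Abelianization.map_of, MonoidHom.id_apply]
      conv_rhs => rw [← inl_left_mul_inr_right x]
      rw [map_mul, h, one_mul]
      rfl)
    (by rw [Abelianization.map_comp, rightHom_comp_inr, Abelianization.map_id])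

end SemidirectProduct

theorem Module.surjective_smul_sub_self {R M : Type*} [Ring R] [AddCommGroup M] [Module R M]
    {r : R} (hr : IsUnit (r - 1)) : Function.Surjective fun m : M => r • m - m := by
  intro x
  refine ⟨hr.unit⁻¹ • x, ?_⟩
  dsimp only
  nth_rw 2 [← one_smul R (hr.unit⁻¹ • x)]
  rw [← sub_smul]
  exact smul_inv_smul hr.unit x

theorem glAction_scalar_apply (R M : Type*) [CommRing R] [AddCommGroup M] [Module R M] (n : ℕ)
    (u : Rˣ) (m : Multiplicative (Fin n → M)) :
    glAction R M n (Matrix.GeneralLinearGroup.scalar (Fin n) u) m =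
      Multiplicative.ofAdd ((u : R) • m.toAdd) := by
  refine funext fun i => ?_
  change ∑ j, Matrix.scalar (Fin n) (u : R) i j • m.toAdd j = (u : R) • m.toAdd i
  simp [Matrix.scalar_apply, Matrix.diagonal_apply, ite_smul]

theorem glAction_scalar_mul_inv_surjective (R M : Type*) [CommRing R] [AddCommGroup M]
    [Module R M] (n : ℕ) {u : Rˣ} (hu : IsUnit ((u : R) - 1)) :
    Function.Surjective fun m : Multiplicative (Fin n → M) =>
      glAction R M n (Matrix.GeneralLinearGroup.scalar (Fin n) u) m * m⁻¹ := by
  intro x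
  obtain ⟨m, hm⟩ := Module.surjective_smul_sub_self (M := Fin n → M) hu x.toAdd
  refine ⟨Multiplicative.ofAdd m, ?_⟩
  dsimp only at hm ⊢
  rw [glAction_scalar_apply, toAdd_ofAdd, ← div_eq_mul_inv, ← ofAdd_sub, hm, ofAdd_toAdd]

theorem abelianization_gl_semidirect_of_unit_sum_general (R M : Type*) [CommRing R] [AddCommGroup M]
    [Module R M] (hu : ∃ u v : Rˣ, (u : R) + (v : R) = 1) (n : ℕ) :
    Nonempty (Abelianization (Multiplicative (Fin n → M) ⋊[glAction R M n] GL (Fin n) R)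
      ≃* Abelianization (GL (Fin n) R)) := by
  obtain ⟨u, v, huv⟩ := hu
  have hu1 : IsUnit ((u : R) - 1) := by
    rw [← huv, sub_add_cancel_left]
    exact v.isUnit.neg
  exact ⟨SemidirectProduct.abelianizationEquivOfInlEqOne
    (SemidirectProduct.abelianization_of_inl_eq_one_of_surjective _
      (glAction_scalar_mul_inv_surjective R M n hu1))⟩

/-- If `1` is a sum of two units of the commutative ring `R`, then for every
`n ≥ 1` the abelianization of `GL_n(R) ⋉ Mⁿ` is isomorphic to that of `GL_n(R)`. -/
theorem abelianization_gl_semidirect_of_unit_sum (R M : Type*) [CommRing R] [AddCommGroup M]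
    [Module R M] (hu : ∃ u v : Rˣ, (u : R) + (v : R) = 1) (n : ℕ) (hn : 1 ≤ n) :
    Nonempty (Abelianization (Multiplicative (Fin n → M) ⋊[glAction R M n] GL (Fin n) R)
      ≃* Abelianization (GL (Fin n) R)) :=
  abelianization_gl_semidirect_of_unit_sum_general R M hu n
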